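/- arXiv:1007.0070 — 2 statements merged into one kernel-verified Lean document; each statement's English description precedes it below -/
import Mathlib

section
/- For every a > 1 and every ε ∈ Σ whose head is (ε₀, ε₁, ε₂, …) = (+1, -1, -1, -1, …), the derivative of the function b ↦ q(ε)(a, b) at b = 0 equals (1 - 2/a) / (a(a-1)²). In particular, for a = 2 this derivative is 0. -/
open Filter

/-- Depth-`k` truncation of the continued fraction
`r_n(ε)(a,b) = 1/(aε_n + b/(aε_{n+1} + b/(aε_{n+2} + ⋯)))`. -/
noncomputable def rTrunc (a b : ℝ) (ε : ℤ → ℝ) : ℕ → ℤ → ℝ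
  | 0, n => 1 / (a * ε n)
  | k + 1, n => 1 / (a * ε n + b * rTrunc a b ε k (n + 1))

/-- The continued fraction `r_n(ε)(a,b)`, as the limit of its finite truncations. -/
noncomputable def rCF (a b : ℝ) (ε : ℤ → ℝ) (n : ℤ) : ℝ :=
  limUnder atTop (fun k => rTrunc a b ε k n)

/-- Depth-`k` truncation of the continued fraction
`s_n(ε)(a,b) = 1/(-aε_n + b/(-aε_{n-1} + b/(-aε_{n-2} + ⋯)))`. -/
noncomputable def sTrunc (a b : ℝ) (ε : ℤ → ℝ) : ℕ → ℤ → ℝ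
  | 0, n => 1 / (-(a * ε n))
  | k + 1, n => 1 / (-(a * ε n) + b * sTrunc a b ε k (n - 1))

/-- The continued fraction `s_n(ε)(a,b)`, as the limit of its finite truncations. -/
noncomputable def sCF (a b : ℝ) (ε : ℤ → ℝ) (n : ℤ) : ℝ :=
  limUnder atTop (fun k => sTrunc a b ε k n)

/-- `p(ε)(a,b) = 1 - b s₋₂ + b² s₋₂s₋₃ - b³ s₋₂s₋₃s₋₄ + ⋯`. -/
noncomputable def pFun (a b : ℝ) (ε : ℤ → ℝ) : ℝ :=
  ∑' k : ℕ, (-b) ^ k * ∏ j ∈ Finset.range k, sCF a b ε (-2 - (j : ℤ))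

/-- `q(ε)(a,b) = r₀ - r₀r₁ + r₀r₁r₂ - ⋯`. -/
noncomputable def qFun (a b : ℝ) (ε : ℤ → ℝ) : ℝ :=
  ∑' n : ℕ, (-1 : ℝ) ^ n * ∏ j ∈ Finset.range (n + 1), rCF a b ε (j : ℤ)

/-!
If `ε n = -1` for `n ≥ 1`, every tail truncation of `r_n` (`n ≥ 1`) is an iterate at `0` of
`x ↦ 1 / (-a + b x)`, which for small `|b|` maps `[-1, 1]` into itself and contracts by the
factor `|b|` towards its fixed point `R(b) = -2 / (a + √(a² + 4b))`. Hence `r_n = R` for `n ≥ 1`,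
`r₀ = 1 / (a + b R)` and `q` is the geometric series `r₀ / (1 + R)`: near `b = 0`,
`q = 1 / ((a + b R)(1 + R))`, which is differentiated using `R(0) = -1/a`, `R'(0) = 1/a³`.
-/

open Topology

noncomputable def tailStep (a b x : ℝ) : ℝ := 1 / (-a + b * x)

/-- The root of `b R² - a R - 1 = 0` that tends to `-1/a` as `b → 0`, i.e. the fixed point
of `tailStep a b` in `[-1, 1]`. -/
noncomputable def tailRoot (a b : ℝ) : ℝ := -2 / (a + √(a ^ 2 + 4 * b))

lemma rTrunc_eq_iterate_tailStep {a b : ℝ} {ε : ℤ → ℝ} {n₀ : ℤ}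
    (hε : ∀ m, n₀ ≤ m → ε m = -1) (k : ℕ) {n : ℤ} (hn : n₀ ≤ n) :
    rTrunc a b ε k n = (tailStep a b)^[k + 1] 0 := by
  induction k generalizing n with
  | zero => simp [rTrunc, tailStep, hε n hn]
  | succ k ih =>
    rw [Function.iterate_succ_apply', ← ih (n := n + 1) (by omega), rTrunc, hε n hn, tailStep]
    ring_nf

lemma tendsto_rTrunc_of_tendsto_succ {a b : ℝ} {ε : ℤ → ℝ} {n : ℤ} {x : ℝ}
    (h : Tendsto (fun k => rTrunc a b ε k (n + 1)) atTop (𝓝 x)) (hx : a * ε n + b * x ≠ 0) :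
    Tendsto (fun k => rTrunc a b ε k n) atTop (𝓝 (1 / (a * ε n + b * x))) :=
  (tendsto_add_atTop_iff_nat 1).mp <|
    tendsto_const_nhds.div (tendsto_const_nhds.add (h.const_mul b)) hx

lemma qFun_eq_of_rCF_eq {a b R : ℝ} {ε : ℤ → ℝ} (hR : |R| < 1)
    (h : ∀ n : ℤ, 1 ≤ n → rCF a b ε n = R) :
    qFun a b ε = rCF a b ε 0 / (1 + R) := by
  have hterm : ∀ n : ℕ, (-1 : ℝ) ^ n * ∏ j ∈ Finset.range (n + 1), rCF a b ε j =
      rCF a b ε 0 * (-R) ^ n := by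
    intro n
    rw [Finset.prod_range_succ', Finset.prod_congr rfl fun j _ => h (j + 1 : ℕ) (by omega),
      Finset.prod_const, Finset.card_range, neg_pow]
    push_cast
    ring
  rw [qFun, tsum_congr hterm, tsum_mul_left,
    tsum_geometric_of_norm_lt_one (by rwa [norm_neg, Real.norm_eq_abs]), sub_neg_eq_add,
    div_eq_mul_inv]

section Tail

variable {a b : ℝ}

lemma abs_mul_le_of_abs_le_one {x : ℝ} (hx : |x| ≤ 1) : |b * x| ≤ |b| := by
  rw [abs_mul]
  exact mul_le_of_le_one_right (abs_nonneg b) hx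

lemma one_le_abs_neg_add_mul (hab : |b| < a - 1) {x : ℝ} (hx : |x| ≤ 1) :
    1 ≤ |-a + b * x| := by
  have := abs_mul_le_of_abs_le_one (b := b) hx
  rw [abs_of_neg (by linarith [le_abs_self (b * x)])]
  linarith [le_abs_self (b * x)]

lemma abs_tailStep_le_one (hab : |b| < a - 1) {x : ℝ} (hx : |x| ≤ 1) :
    |tailStep a b x| ≤ 1 := by
  rw [tailStep, abs_div, abs_one]
  exact div_le_one_of_le₀ (one_le_abs_neg_add_mul hab hx) (abs_nonneg _)

lemma abs_iterate_tailStep_le_one (hab : |b| < a - 1) (k : ℕ) :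
    |(tailStep a b)^[k] 0| ≤ 1 := by
  induction k with
  | zero => simp
  | succ k ih => rw [Function.iterate_succ_apply']; exact abs_tailStep_le_one hab ih

lemma two_lt_add_sqrt (hab : |b| < a - 1) : 2 < a + √(a ^ 2 + 4 * b) := by
  have : 2 - a < √(a ^ 2 + 4 * b) :=
    Real.lt_sqrt_of_sq_lt (by nlinarith [neg_abs_le b])
  linarith

lemma neg_one_lt_tailRoot (hab : |b| < a - 1) : -1 < tailRoot a b := by
  have h := two_lt_add_sqrt hab
  rw [tailRoot, lt_div_iff₀ (by linarith)]
  linarith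

lemma tailRoot_neg (hab : |b| < a - 1) : tailRoot a b < 0 :=
  div_neg_of_neg_of_pos (by norm_num) (by linarith [two_lt_add_sqrt hab])

lemma abs_tailRoot_lt_one (hab : |b| < a - 1) : |tailRoot a b| < 1 :=
  abs_lt.mpr ⟨neg_one_lt_tailRoot hab, by linarith [tailRoot_neg hab]⟩

lemma tailRoot_mul_neg_add_mul (hab : |b| < a - 1) :
    tailRoot a b * (-a + b * tailRoot a b) = 1 := by
  have hs := Real.sq_sqrt (show 0 ≤ a ^ 2 + 4 * b by nlinarith [neg_abs_le b, sq_nonneg (a - 2)])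
  have hden : a + √(a ^ 2 + 4 * b) ≠ 0 := by linarith [two_lt_add_sqrt hab]
  rw [tailRoot]
  field_simp
  linear_combination -hs

lemma abs_tailStep_sub_tailRoot_le (hab : |b| < a - 1) {x : ℝ} (hx : |x| ≤ 1) :
    |tailStep a b x - tailRoot a b| ≤ |b| * |x - tailRoot a b| := by
  set R := tailRoot a b
  have hd := one_le_abs_neg_add_mul hab hx
  have hd0 : -a + b * x ≠ 0 := abs_pos.mp (by linarith)
  have hR : |R| ≤ 1 := (abs_tailRoot_lt_one hab).le
  have hdiff : tailStep a b x - R = R * b * (R - x) / (-a + b * x) := by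
    rw [tailStep, eq_div_iff hd0, sub_mul, one_div_mul_cancel hd0]
    linear_combination -tailRoot_mul_neg_add_mul hab
  rw [hdiff, abs_div, abs_mul, abs_mul, abs_sub_comm R x, mul_assoc]
  calc |R| * (|b| * |x - R|) / |-a + b * x| ≤ |R| * (|b| * |x - R|) :=
        div_le_self (by positivity) hd
    _ ≤ |b| * |x - R| := mul_le_of_le_one_left (by positivity) hR

lemma abs_iterate_tailStep_sub_tailRoot_le (hab : |b| < a - 1) (k : ℕ) :
    |(tailStep a b)^[k] 0 - tailRoot a b| ≤ |b| ^ k := by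
  induction k with
  | zero => simpa using (abs_tailRoot_lt_one hab).le
  | succ k ih =>
    rw [Function.iterate_succ_apply', pow_succ']
    exact (abs_tailStep_sub_tailRoot_le hab (abs_iterate_tailStep_le_one hab k)).trans
      (mul_le_mul_of_nonneg_left ih (abs_nonneg b))

lemma tendsto_iterate_tailStep (hb : |b| < 1) (hab : |b| < a - 1) :
    Tendsto (fun k => (tailStep a b)^[k] 0) atTop (𝓝 (tailRoot a b)) := by
  rw [tendsto_iff_norm_sub_tendsto_zero]
  exact squeeze_zero (fun _ => norm_nonneg _) (abs_iterate_tailStep_sub_tailRoot_le hab)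
    (tendsto_pow_atTop_nhds_zero_of_lt_one (abs_nonneg b) hb)

end Tail

section Sequence

variable {a b : ℝ} {ε : ℤ → ℝ} {n₀ n : ℤ}

lemma tendsto_rTrunc_tailRoot (hb : |b| < 1) (hab : |b| < a - 1)
    (hε : ∀ m, n₀ ≤ m → ε m = -1) (hn : n₀ ≤ n) :
    Tendsto (fun k => rTrunc a b ε k n) atTop (𝓝 (tailRoot a b)) := by
  simp_rw [rTrunc_eq_iterate_tailStep hε _ hn]
  exact (tendsto_add_atTop_iff_nat 1).mpr (tendsto_iterate_tailStep hb hab)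

lemma rCF_eq_tailRoot (hb : |b| < 1) (hab : |b| < a - 1)
    (hε : ∀ m, n₀ ≤ m → ε m = -1) (hn : n₀ ≤ n) : rCF a b ε n = tailRoot a b :=
  (tendsto_rTrunc_tailRoot hb hab hε hn).limUnder_eq

lemma qFun_eq_of_abs_lt (hb : |b| < 1) (hab : |b| < a - 1) (hε₀ : ε 0 = 1)
    (hε : ∀ n, 1 ≤ n → ε n = -1) :
    qFun a b ε = ((a + b * tailRoot a b) * (1 + tailRoot a b))⁻¹ := by
  have hden : a + b * tailRoot a b ≠ 0 := by
    have := abs_mul_le_of_abs_le_one (b := b) (abs_tailRoot_lt_one hab).le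
    linarith [neg_abs_le (b * tailRoot a b)]
  have hhead : rCF a b ε 0 = 1 / (a + b * tailRoot a b) := by
    have h := tendsto_rTrunc_of_tendsto_succ
      (tendsto_rTrunc_tailRoot (n := 0 + 1) hb hab hε le_rfl) (by rwa [hε₀, mul_one])
    rw [hε₀, mul_one] at h
    exact h.limUnder_eq
  rw [qFun_eq_of_rCF_eq (abs_tailRoot_lt_one hab) fun n hn => rCF_eq_tailRoot hb hab hε hn,
    hhead, mul_inv, one_div, div_eq_mul_inv]

end Sequence

section Derivative

variable {a : ℝ}

lemma tailRoot_zero (ha : 0 < a) : tailRoot a 0 = -a⁻¹ := by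
  rw [tailRoot, mul_zero, add_zero, Real.sqrt_sq ha.le]
  field_simp
  ring

lemma hasDerivAt_tailRoot_zero (ha : 0 < a) : HasDerivAt (tailRoot a) (a ^ 3)⁻¹ 0 := by
  have hsqrt : √(a ^ 2 + 4 * 0) = a := by rw [mul_zero, add_zero, Real.sqrt_sq ha.le]
  have hlin : HasDerivAt (fun b : ℝ => a ^ 2 + 4 * b) 4 0 := by
    simpa using ((hasDerivAt_id (0 : ℝ)).const_mul 4).const_add (a ^ 2)
  have h := (hasDerivAt_const (0 : ℝ) (-2 : ℝ)).div
    ((hlin.sqrt (by positivity)).const_add a) (by rw [hsqrt]; positivity)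
  refine h.congr_deriv ?_
  rw [hsqrt]
  field_simp
  ring

lemma hasDerivAt_closedForm_zero (ha : 1 < a) :
    HasDerivAt (fun b => ((a + b * tailRoot a b) * (1 + tailRoot a b))⁻¹)
      ((1 - 2 / a) / (a * (a - 1) ^ 2)) 0 := by
  have ha₀ : 0 < a := by linarith
  have hR := hasDerivAt_tailRoot_zero ha₀
  have hne : (a + 0 * tailRoot a 0) * (1 + tailRoot a 0) ≠ 0 := by
    rw [tailRoot_zero ha₀, zero_mul, add_zero, mul_add, mul_one, mul_neg, mul_inv_cancel₀ ha₀.ne']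
    linarith
  have h := ((((hasDerivAt_id (0 : ℝ)).mul hR).const_add a).mul (hR.const_add 1)).inv hne
  refine h.congr_deriv ?_
  simp only [Pi.mul_apply, id, tailRoot_zero ha₀]
  field_simp
  ring

end Derivative

lemma hasDerivAt_qFun_zero {a : ℝ} (ha : 1 < a) {ε : ℤ → ℝ} (hε₀ : ε 0 = 1)
    (hε : ∀ n, 1 ≤ n → ε n = -1) :
    HasDerivAt (fun b => qFun a b ε) ((1 - 2 / a) / (a * (a - 1) ^ 2)) 0 := by
  have habs : Tendsto (fun b : ℝ => |b|) (𝓝 0) (𝓝 0) := continuous_abs.tendsto' 0 0 abs_zero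
  refine (hasDerivAt_closedForm_zero ha).congr_of_eventuallyEq ?_
  filter_upwards [habs.eventually_lt_const one_pos,
    habs.eventually_lt_const (sub_pos.mpr ha)] with b hb hab
  exact qFun_eq_of_abs_lt hb hab hε₀ hε

theorem deriv_q_at_zero :
    (∀ a : ℝ, 1 < a → ∀ ε : ℤ → ℝ, (∀ n : ℤ, ε n = 1 ∨ ε n = -1) →
      ε 0 = 1 → (∀ n : ℤ, 1 ≤ n → ε n = -1) →
      HasDerivAt (fun b => qFun a b ε) ((1 - 2 / a) / (a * (a - 1) ^ 2)) 0) ∧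
    (∀ ε : ℤ → ℝ, (∀ n : ℤ, ε n = 1 ∨ ε n = -1) →
      ε 0 = 1 → (∀ n : ℤ, 1 ≤ n → ε n = -1) →
      HasDerivAt (fun b => qFun 2 b ε) 0 0) := by
  refine ⟨fun a ha ε _ hε₀ hε => hasDerivAt_qFun_zero ha hε₀ hε, fun ε _ hε₀ hε => ?_⟩
  simpa using hasDerivAt_qFun_zero one_lt_two hε₀ hε
end

section
/- Suppose 1 < a ≤ 2 and ε ∈ Σ is a sequence whose head (ε₀, ε₁, ε₂, …) belongs to the kneading invariant κ(a) of the tent map T_a. Then the derivative of b ↦ (p - q)(ε)(a, b) at b = 0 satisfies 1/(aε₋₂) - (-2a² + 7a - 2)/(2a³(a-1)) ≤ d/db (p - q)(ε)(a,b)|_{b=0} ≤ 1/(aε₋₂) - (-2a² + 7a - 8)/(2a³(a-1)). -/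
open Filter

/-- The tent map `T_a(x) = 1 - a|x|`. -/
noncomputable def tent (a : ℝ) (x : ℝ) : ℝ := 1 - a * |x|

/-!
For `|b| ≤ (a - 1) / 2` every continued-fraction step `x ↦ 1 / (a ε_n + b x)` maps the ball
of radius `2 / (a + 1)` into itself and is a `1/2`-contraction there, so the truncations converge
and `r_n = ε_n / a - b ε_{n+1} / a³ + O(b²)`, `s_n = -ε_n / a + O(b)` uniformly in `n`. Hence
`p = 1 + b ε₋₂ / a + O(b²)`, and expanding each product `r₀ ⋯ r_n` to first order in `b`,
`q = q(0) - b ∑ₙ (-1)ⁿ ε₀⋯εₙ (∑_{j ≤ n} ε_j ε_{j+1}) / a^{n+3} + O(b²)`.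

The kneading condition says `T_a^{j+1}(1) = 1 - a ε_j T_a^j(1)`, so the weights
`(-1)ⁿ ε₀⋯εₙ / a^{n+1}` telescope as `σₙ - σₙ₊₁` with `σ_j = (-1)^j ε₀⋯ε_{j-1} T_a^j(1) / a^j`,
and Abel summation turns the derivative of `p - q` at `0` into `ε₋₂ / a + a⁻² ∑_j ε_j ε_{j+1} σ_j`.
As `ε₀ = 1` and `ε₁ = -1`, the first two terms of the last series are explicit, the third has
absolute value `|a² - a - 1| / a²` (and `ε₂ = 1` forces `a² ≤ a + 1`), and `|σ_j| ≤ a^{-j}`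
bounds the tail; the two cases `ε₂ = ±1` give the stated bounds.
-/

open Topology Finset

lemma mul_self_eq_one_of_abs_eq_one {e : ℝ} (he : |e| = 1) : e * e = 1 := by
  rw [← abs_mul_abs_self, he, mul_one]

lemma two_div_add_one_le_one {a : ℝ} (ha : 1 ≤ a) : 2 / (a + 1) ≤ 1 :=
  (div_le_one (by linarith)).2 (by linarith)

lemma abs_prod_range_le {x : ℕ → ℝ} {v : ℝ} (hx : ∀ j, |x j| ≤ v) (m : ℕ) :
    |∏ j ∈ range m, x j| ≤ v ^ m := by
  rw [abs_prod]
  calc ∏ j ∈ range m, |x j| ≤ ∏ _j ∈ range m, v :=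
        prod_le_prod (fun j _ => abs_nonneg (x j)) (fun j _ => hx j)
    _ = v ^ m := by rw [prod_const, card_range]

lemma abs_tsum_nat_add_le_geometric {f : ℕ → ℝ} {r : ℝ} (hr0 : 0 ≤ r) (hr1 : r < 1)
    (hf : ∀ j, |f j| ≤ r ^ j) (k : ℕ) : |∑' j, f (j + k)| ≤ r ^ k / (1 - r) := by
  rw [div_eq_mul_inv, ← Real.norm_eq_abs]
  refine tsum_of_norm_bounded ((hasSum_geometric_of_lt_one hr0 hr1).mul_left (r ^ k)) fun j => ?_
  rw [Real.norm_eq_abs, ← pow_add, add_comm k]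
  exact hf (j + k)

lemma abs_tsum_neg_pow_mul_prod_sub_le {y : ℕ → ℝ} {b : ℝ} (hy : ∀ j, |y j| ≤ 1)
    (hb : |b| ≤ 1 / 2) :
    |∑' k : ℕ, (-b) ^ k * ∏ j ∈ range k, y j - (1 - b * y 0)| ≤ 2 * b ^ 2 := by
  set f : ℕ → ℝ := fun k => (-b) ^ k * ∏ j ∈ range k, y j
  have hf k : |f k| ≤ |b| ^ k := by
    simpa [f, abs_mul, abs_pow] using
      mul_le_mul_of_nonneg_left (abs_prod_range_le hy k) (pow_nonneg (abs_nonneg b) k)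
  have hs : Summable f :=
    (summable_geometric_of_lt_one (abs_nonneg b) (by linarith)).of_norm_bounded hf
  have h01 : ∑ k ∈ range 2, f k = 1 - b * y 0 := by simp [f, sum_range_succ]; ring
  rw [← hs.sum_add_tsum_nat_add 2, h01, add_sub_cancel_left]
  refine (abs_tsum_nat_add_le_geometric (abs_nonneg b) (by linarith) hf 2).trans ?_
  rw [sq_abs, div_le_iff₀ (by linarith)]
  nlinarith [sq_nonneg b]

lemma summable_add_one_sq_mul_geometric {v : ℝ} (hv0 : 0 ≤ v) (hv1 : v < 1) :
    Summable fun n : ℕ => ((n : ℝ) + 1) ^ 2 * v ^ n := by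
  have hv : ‖v‖ < 1 := by rwa [Real.norm_of_nonneg hv0]
  have h k := summable_pow_mul_geometric_of_norm_lt_one k hv
  refine (((h 2).add ((h 1).mul_left 2)).add (h 0)).congr fun n => ?_
  ring

lemma hasDerivAt_zero_of_abs_sub_le {f : ℝ → ℝ} {c d K δ : ℝ} (hδ : 0 < δ)
    (h : ∀ b, |b| ≤ δ → |f b - c - b * d| ≤ K * b ^ 2) : HasDerivAt f d 0 := by
  have hc : f 0 = c := by
    have := h 0 (by simpa using hδ.le)
    rw [zero_mul, sub_zero, zero_pow two_ne_zero, mul_zero, abs_nonpos_iff, sub_eq_zero] at this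
    exact this
  rw [hasDerivAt_iff_isLittleO_nhds_zero]
  refine Asymptotics.IsBigO.trans_isLittleO ?_ (Asymptotics.isLittleO_pow_id one_lt_two)
  refine Asymptotics.IsBigO.of_bound K ?_
  filter_upwards [Metric.closedBall_mem_nhds 0 hδ] with b hb
  rw [mem_closedBall_zero_iff, Real.norm_eq_abs] at hb
  simpa [hc, mul_comm, abs_of_nonneg (sq_nonneg b)] using h b hb

lemma sum_range_sub_mul_sum_range (σ e : ℕ → ℝ) (N : ℕ) :
    ∑ n ∈ range N, (σ n - σ (n + 1)) * ∑ j ∈ range (n + 1), e j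
      = ∑ j ∈ range N, e j * σ j - (∑ j ∈ range N, e j) * σ N := by
  induction N with
  | zero => simp
  | succ N ih => rw [sum_range_succ, ih, sum_range_succ, sum_range_succ]; ring

lemma tsum_sub_mul_sum_range {σ e : ℕ → ℝ}
    (hs : Summable fun n => (σ n - σ (n + 1)) * ∑ j ∈ range (n + 1), e j)
    (he : Summable fun j => e j * σ j)
    (hlim : Tendsto (fun N => (∑ j ∈ range N, e j) * σ N) atTop (𝓝 0)) :
    ∑' n, (σ n - σ (n + 1)) * ∑ j ∈ range (n + 1), e j = ∑' j, e j * σ j := by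
  refine tendsto_nhds_unique hs.hasSum.tendsto_sum_nat ?_
  simp_rw [sum_range_sub_mul_sum_range]
  simpa using he.hasSum.tendsto_sum_nat.sub hlim

section ProductExpansion

/-- The coefficient of `b` in the polynomial `∏ j ∈ range m, (α j + b * β j)`. -/
def prodDeriv (α β : ℕ → ℝ) : ℕ → ℝ
  | 0 => 0
  | m + 1 => prodDeriv α β m * α m + (∏ j ∈ range m, α j) * β m

noncomputable def altProdSum (x : ℕ → ℝ) : ℝ := ∑' n : ℕ, (-1) ^ n * ∏ j ∈ range (n + 1), x j

variable {x α β : ℕ → ℝ} {b u v C : ℝ}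

lemma abs_prodDeriv_le (hα : ∀ j, |α j| ≤ u) (hβ : ∀ j, |β j| ≤ u) :
    ∀ m, |prodDeriv α β m| ≤ m * u ^ m
  | 0 => by simp [prodDeriv]
  | m + 1 => by
    have hu : 0 ≤ u := (abs_nonneg _).trans (hα 0)
    calc |prodDeriv α β (m + 1)|
        ≤ |prodDeriv α β m| * |α m| + |∏ j ∈ range m, α j| * |β m| := by
          rw [prodDeriv, ← abs_mul, ← abs_mul]; exact abs_add_le _ _
      _ ≤ m * u ^ m * u + u ^ m * u := by
          gcongr
          exacts [abs_prodDeriv_le hα hβ m, hα m, abs_prod_range_le hα m, hβ m]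
      _ = (m + 1 : ℕ) * u ^ (m + 1) := by push_cast; ring

lemma abs_prod_sub_prod_sub_prodDeriv_succ_le (hx : ∀ j, |x j| ≤ v) (hα : ∀ j, |α j| ≤ u)
    (hβ : ∀ j, |β j| ≤ u) (huv : u ≤ v) (hv : v ≤ 1) (hb : |b| ≤ 1)
    (hxαβ : ∀ j, |x j - α j - b * β j| ≤ C * b ^ 2) (m : ℕ) :
    |∏ j ∈ range (m + 1), x j - ∏ j ∈ range (m + 1), α j - b * prodDeriv α β (m + 1)|
      ≤ |∏ j ∈ range m, x j - ∏ j ∈ range m, α j - b * prodDeriv α β m| * v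
        + ((m + 1) * C + m) * b ^ 2 * v ^ m := by
  have hu : 0 ≤ u := (abs_nonneg _).trans (hα 0)
  have hv0 : 0 ≤ v := hu.trans huv
  have hC : 0 ≤ C * b ^ 2 := (abs_nonneg _).trans (hxαβ 0)
  set D := ∏ j ∈ range m, x j - ∏ j ∈ range m, α j - b * prodDeriv α β m
  set A := ∏ j ∈ range m, α j
  set B := prodDeriv α β m
  have hrec : ∏ j ∈ range (m + 1), x j - ∏ j ∈ range (m + 1), α j - b * prodDeriv α β (m + 1)
      = D * x m + (A + b * B) * (x m - α m - b * β m) + b ^ 2 * B * β m := by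
    simp only [prod_range_succ, prodDeriv, D, A, B]; ring
  have hA : |A| ≤ v ^ m := (abs_prod_range_le hα m).trans (pow_le_pow_left₀ hu huv m)
  have hB : |B| ≤ m * v ^ m := (abs_prodDeriv_le hα hβ m).trans (by gcongr)
  have hβ1 : |β m| ≤ 1 := (hβ m).trans (huv.trans hv)
  have hAB : |A + b * B| ≤ (m + 1) * v ^ m := by
    calc |A + b * B| ≤ |A| + |b| * |B| := by rw [← abs_mul]; exact abs_add_le _ _
      _ ≤ v ^ m + 1 * (m * v ^ m) := by gcongr
      _ = (m + 1) * v ^ m := by ring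
  rw [hrec]
  calc _ ≤ |D| * v + (m + 1) * v ^ m * (C * b ^ 2) + b ^ 2 * (m * v ^ m) * 1 := by
        refine (abs_add_le _ _).trans (add_le_add ((abs_add_le _ _).trans (add_le_add ?_ ?_)) ?_)
        · rw [abs_mul]; exact mul_le_mul_of_nonneg_left (hx m) (abs_nonneg _)
        · rw [abs_mul]; exact mul_le_mul hAB (hxαβ m) (abs_nonneg _) (by positivity)
        · rw [abs_mul, abs_mul, abs_pow, sq_abs]; gcongr
    _ = _ := by ring

lemma abs_prod_sub_prod_sub_prodDeriv_mul_le (hx : ∀ j, |x j| ≤ v) (hα : ∀ j, |α j| ≤ u)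
    (hβ : ∀ j, |β j| ≤ u) (huv : u ≤ v) (hv : v ≤ 1) (hb : |b| ≤ 1) (hC : 0 ≤ C)
    (hxαβ : ∀ j, |x j - α j - b * β j| ≤ C * b ^ 2) :
    ∀ m, |∏ j ∈ range m, x j - ∏ j ∈ range m, α j - b * prodDeriv α β m| * v
      ≤ (C + 1) * m ^ 2 * b ^ 2 * v ^ m
  | 0 => by simp [prodDeriv]
  | m + 1 => by
    have hv0 : 0 ≤ v := (abs_nonneg _).trans (hx 0)
    have ih := abs_prod_sub_prod_sub_prodDeriv_mul_le hx hα hβ huv hv hb hC hxαβ m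
    calc _ ≤ (|∏ j ∈ range m, x j - ∏ j ∈ range m, α j - b * prodDeriv α β m| * v
            + ((m + 1) * C + m) * b ^ 2 * v ^ m) * v := by
          gcongr; exact abs_prod_sub_prod_sub_prodDeriv_succ_le hx hα hβ huv hv hb hxαβ m
      _ ≤ ((C + 1) * m ^ 2 * b ^ 2 * v ^ m + ((m + 1) * C + m) * b ^ 2 * v ^ m) * v := by
          gcongr
      _ = ((C + 1) * m ^ 2 + (m + 1) * C + m) * (b ^ 2 * v ^ (m + 1)) := by ring
      _ ≤ (C + 1) * (m + 1) ^ 2 * (b ^ 2 * v ^ (m + 1)) := by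
          gcongr; nlinarith [mul_nonneg hC m.cast_nonneg]
      _ = (C + 1) * ((m + 1 : ℕ) : ℝ) ^ 2 * b ^ 2 * v ^ (m + 1) := by push_cast; ring

lemma abs_altProdSum_sub_le (hx : ∀ j, |x j| ≤ v) (hα : ∀ j, |α j| ≤ u)
    (hβ : ∀ j, |β j| ≤ u) (huv : u ≤ v) (hv0 : 0 < v) (hv1 : v < 1) (hb : |b| ≤ 1) (hC : 0 ≤ C)
    (hxαβ : ∀ j, |x j - α j - b * β j| ≤ C * b ^ 2) :
    |altProdSum x - altProdSum α - b * ∑' n : ℕ, (-1) ^ n * prodDeriv α β (n + 1)|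
      ≤ (C + 1) * (∑' n : ℕ, ((n : ℝ) + 1) ^ 2 * v ^ n) * b ^ 2 := by
  have hu : 0 ≤ u := (abs_nonneg _).trans (hα 0)
  set g : ℕ → ℝ := fun n => ((n : ℝ) + 1) ^ 2 * v ^ n
  have hg : Summable g := summable_add_one_sq_mul_geometric hv0.le hv1
  have hn1 (n : ℕ) : (1 : ℝ) ≤ n + 1 := by linarith [(n.cast_nonneg : (0 : ℝ) ≤ n)]
  have hvn (n : ℕ) : v ^ (n + 1) ≤ g n := by
    have h1 : v ≤ ((n : ℝ) + 1) ^ 2 := by nlinarith [hn1 n]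
    simpa only [g, pow_succ, mul_comm] using mul_le_mul_of_nonneg_left h1 (pow_nonneg hv0.le n)
  have hsum {y : ℕ → ℝ} (hy : ∀ n, |y n| ≤ g n) : Summable fun n => (-1) ^ n * y n :=
    hg.of_norm_bounded fun n => by simpa using hy n
  have hX := hsum fun n => (abs_prod_range_le hx (n + 1)).trans (hvn n)
  have hA := hsum fun n => (abs_prod_range_le hα (n + 1)).trans
    ((pow_le_pow_left₀ hu huv _).trans (hvn n))
  have hB := hsum fun n => (abs_prodDeriv_le hα hβ (n + 1)).trans <| by
    have huv' : u ^ (n + 1) ≤ v ^ n :=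
      (pow_le_pow_left₀ hu huv _).trans (pow_le_pow_of_le_one hv0.le hv1.le n.le_succ)
    calc ((n + 1 : ℕ) : ℝ) * u ^ (n + 1) ≤ (n + 1) * v ^ n := by push_cast; gcongr
      _ ≤ g n := by
          simp only [g]; rw [sq, mul_assoc]; exact le_mul_of_one_le_left (by positivity) (hn1 n)
  rw [altProdSum, altProdSum, ← tsum_mul_left, ← hX.tsum_sub hA,
    ← (hX.sub hA).tsum_sub (hB.mul_left b), ← Real.norm_eq_abs]
  refine (tsum_of_norm_bounded (hg.hasSum.mul_left ((C + 1) * b ^ 2)) fun n => ?_).trans_eq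
    (by ring)
  have hD := abs_prod_sub_prod_sub_prodDeriv_mul_le hx hα hβ huv hv1.le hb hC hxαβ (n + 1)
  rw [show ∀ X A P : ℝ, (-1) ^ n * X - (-1) ^ n * A - b * ((-1) ^ n * P)
      = (-1) ^ n * (X - A - b * P) from fun _ _ _ => by ring, norm_mul, norm_pow, norm_neg,
    norm_one, one_pow, one_mul, Real.norm_eq_abs]
  refine le_of_mul_le_mul_right (hD.trans_eq ?_) hv0
  simp only [g]; push_cast; ring

end ProductExpansion

section ContinuedFraction

variable {a b : ℝ}

lemma le_abs_mul_add_mul (ha : 1 < a) (hb : |b| ≤ (a - 1) / 2) {e x : ℝ} (he : |e| = 1)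
    (hx : |x| ≤ 2 / (a + 1)) : (a + 1) / 2 ≤ |a * e + b * x| := by
  have hx1 := hx.trans (two_div_add_one_le_one ha.le)
  have hbx : |b * x| ≤ (a - 1) / 2 := by
    rw [abs_mul]; nlinarith [abs_nonneg b, abs_nonneg x]
  have hae : |a * e| = a := by rw [abs_mul, he, mul_one, abs_of_pos (by linarith)]
  have := abs_sub_abs_le_abs_sub (a * e) (-(b * x))
  rw [abs_neg, sub_neg_eq_add, hae] at this
  linarith

lemma abs_one_div_mul_add_mul_le (ha : 1 < a) (hb : |b| ≤ (a - 1) / 2) {e x : ℝ}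
    (he : |e| = 1) (hx : |x| ≤ 2 / (a + 1)) : |1 / (a * e + b * x)| ≤ 2 / (a + 1) := by
  have hd := le_abs_mul_add_mul ha hb he hx
  rw [abs_div, abs_one, one_div_le (by linarith) (by positivity), one_div_div]
  exact hd

lemma abs_one_div_sub_one_div_le (ha : 1 < a) (hb : |b| ≤ (a - 1) / 2) {e x y : ℝ}
    (he : |e| = 1) (hx : |x| ≤ 2 / (a + 1)) (hy : |y| ≤ 2 / (a + 1)) :
    |1 / (a * e + b * x) - 1 / (a * e + b * y)| ≤ |x - y| / 2 := by
  have hdx := le_abs_mul_add_mul ha hb he hx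
  have hdy := le_abs_mul_add_mul ha hb he hy
  have hpos : 0 < (a + 1) / 2 := by linarith
  rw [div_sub_div _ _ (abs_pos.1 (hpos.trans_le hdx)) (abs_pos.1 (hpos.trans_le hdy)),
    show 1 * (a * e + b * y) - (a * e + b * x) * 1 = -(b * (x - y)) by ring, abs_div, abs_neg,
    div_le_div_iff₀ (by rw [abs_mul]; nlinarith) two_pos, abs_mul, abs_mul]
  have hden : ((a + 1) / 2) * ((a + 1) / 2) ≤ |a * e + b * x| * |a * e + b * y| :=
    mul_le_mul hdx hdy hpos.le (abs_nonneg _)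
  have hb2 : |b| * 2 ≤ ((a + 1) / 2) * ((a + 1) / 2) := by nlinarith
  nlinarith [mul_le_mul_of_nonneg_left (hb2.trans hden) (abs_nonneg (x - y))]

lemma abs_one_div_mul_add_mul_sub_le (ha : 1 < a) (hb : |b| ≤ (a - 1) / 2) {e x : ℝ}
    (he : |e| = 1) (hx : |x| ≤ 2 / (a + 1)) : |1 / (a * e + b * x) - e / a| ≤ |b| := by
  have hd := le_abs_mul_add_mul ha hb he hx
  have hd0 : a * e + b * x ≠ 0 := abs_pos.1 (by linarith)
  have hx1 := hx.trans (two_div_add_one_le_one ha.le)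
  have key : 1 / (a * e + b * x) - e / a = -(b * x * e) / (a * (a * e + b * x)) := by
    field_simp
    linear_combination (-a) * mul_self_eq_one_of_abs_eq_one he
  rw [key, abs_div, abs_neg, abs_mul, abs_mul, he, mul_one, abs_mul,
    abs_of_pos (by linarith : 0 < a), div_le_iff₀ (by nlinarith)]
  have h1 : 1 ≤ a * |a * e + b * x| := by nlinarith
  nlinarith [abs_nonneg b, mul_le_mul_of_nonneg_left hx1 (abs_nonneg b)]

lemma abs_one_div_mul_add_mul_sub_add_le (ha : 1 < a) (hb : |b| ≤ (a - 1) / 2) {e e' x : ℝ}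
    (he : |e| = 1) (hx : |x| ≤ 2 / (a + 1)) (hxe' : |x - e' / a| ≤ |b|) :
    |1 / (a * e + b * x) - e / a + b * e' / a ^ 3| ≤ 2 * b ^ 2 := by
  have hd := le_abs_mul_add_mul ha hb he hx
  have hd0 : a * e + b * x ≠ 0 := abs_pos.1 (by linarith)
  have hx1 := hx.trans (two_div_add_one_le_one ha.le)
  have ha2 : 1 ≤ a ^ 2 := by nlinarith
  -- second-order Taylor expansion of `1 / (D + h)` at `D = a e`, `h = b x`, with `D ^ 2 = a ^ 2`
  have key : 1 / (a * e + b * x) - e / a + b * e' / a ^ 3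
      = -(b * (x - e' / a)) / a ^ 2 + b ^ 2 * x ^ 2 / (a ^ 2 * (a * e + b * x)) := by
    field_simp
    linear_combination (-a ^ 3) * mul_self_eq_one_of_abs_eq_one he
  have hlin : |-(b * (x - e' / a)) / a ^ 2| ≤ b ^ 2 := by
    rw [abs_div, abs_neg, abs_mul, abs_of_pos (show (0 : ℝ) < a ^ 2 by positivity),
      div_le_iff₀ (by positivity), ← sq_abs b]
    nlinarith [mul_le_mul_of_nonneg_left hxe' (abs_nonneg b), sq_nonneg |b|]
  have hquad : |b ^ 2 * x ^ 2 / (a ^ 2 * (a * e + b * x))| ≤ b ^ 2 := by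
    rw [abs_div, abs_mul, abs_mul, abs_of_nonneg (sq_nonneg b),
      abs_of_pos (show (0 : ℝ) < a ^ 2 by positivity), abs_pow, div_le_iff₀ (by positivity)]
    have h1 : 1 ≤ a ^ 2 * |a * e + b * x| := by nlinarith
    have h2 : |x| ^ 2 ≤ 1 := by nlinarith [abs_nonneg x]
    nlinarith [sq_nonneg b, mul_le_mul_of_nonneg_left h2 (sq_nonneg b)]
  rw [key, two_mul]
  exact (abs_add_le _ _).trans (add_le_add hlin hquad)

variable {ε : ℤ → ℝ}

lemma abs_rTrunc_le (ha : 1 < a) (hb : |b| ≤ (a - 1) / 2) (hε : ∀ n, |ε n| = 1) :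
    ∀ k n, |rTrunc a b ε k n| ≤ 2 / (a + 1)
  | 0, n => by
    simpa [rTrunc] using abs_one_div_mul_add_mul_le ha hb (hε n) (x := 0) (by simp; positivity)
  | k + 1, n => abs_one_div_mul_add_mul_le ha hb (hε n) (abs_rTrunc_le ha hb hε k (n + 1))

lemma abs_rTrunc_succ_sub_le (ha : 1 < a) (hb : |b| ≤ (a - 1) / 2) (hε : ∀ n, |ε n| = 1) :
    ∀ k n, |rTrunc a b ε (k + 1) n - rTrunc a b ε k n| ≤ 2 * (1 / 2) ^ k
  | 0, n => by
    have h1 := abs_rTrunc_le ha hb hε 1 n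
    have h0 := abs_rTrunc_le ha hb hε 0 n
    have hv := two_div_add_one_le_one ha.le
    linarith [abs_sub (rTrunc a b ε 1 n) (rTrunc a b ε 0 n)]
  | k + 1, n => by
    calc |rTrunc a b ε (k + 2) n - rTrunc a b ε (k + 1) n|
        ≤ |rTrunc a b ε (k + 1) (n + 1) - rTrunc a b ε k (n + 1)| / 2 :=
          abs_one_div_sub_one_div_le ha hb (hε n) (abs_rTrunc_le ha hb hε _ _)
            (abs_rTrunc_le ha hb hε _ _)
      _ ≤ 2 * (1 / 2) ^ k / 2 := by
          gcongr; exact abs_rTrunc_succ_sub_le ha hb hε k (n + 1)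
      _ = 2 * (1 / 2) ^ (k + 1) := by ring

lemma tendsto_rTrunc (ha : 1 < a) (hb : |b| ≤ (a - 1) / 2) (hε : ∀ n, |ε n| = 1) (n : ℤ) :
    Tendsto (fun k => rTrunc a b ε k n) atTop (𝓝 (rCF a b ε n)) := by
  obtain ⟨l, hl⟩ := cauchySeq_tendsto_of_complete <|
    cauchySeq_of_le_geometric (f := fun k => rTrunc a b ε k n) (1 / 2) 2 (by norm_num) fun k => by
      rw [Real.dist_eq, abs_sub_comm]; exact abs_rTrunc_succ_sub_le ha hb hε k n
  rwa [rCF, hl.limUnder_eq]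

lemma abs_rCF_le (ha : 1 < a) (hb : |b| ≤ (a - 1) / 2) (hε : ∀ n, |ε n| = 1) (n : ℤ) :
    |rCF a b ε n| ≤ 2 / (a + 1) :=
  le_of_tendsto (tendsto_rTrunc ha hb hε n).abs
    (Eventually.of_forall fun k => abs_rTrunc_le ha hb hε k n)

lemma rCF_eq (ha : 1 < a) (hb : |b| ≤ (a - 1) / 2) (hε : ∀ n, |ε n| = 1) (n : ℤ) :
    rCF a b ε n = 1 / (a * ε n + b * rCF a b ε (n + 1)) := by
  have hd := le_abs_mul_add_mul ha hb (hε n) (abs_rCF_le ha hb hε (n + 1))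
  refine tendsto_nhds_unique ((tendsto_rTrunc ha hb hε n).comp (tendsto_add_atTop_nat 1)) ?_
  exact tendsto_const_nhds.div
    (((tendsto_rTrunc ha hb hε (n + 1)).const_mul b).const_add _) (abs_pos.1 (by linarith))

lemma abs_rCF_sub_le (ha : 1 < a) (hb : |b| ≤ (a - 1) / 2) (hε : ∀ n, |ε n| = 1) (n : ℤ) :
    |rCF a b ε n - ε n / a| ≤ |b| := by
  rw [rCF_eq ha hb hε]
  exact abs_one_div_mul_add_mul_sub_le ha hb (hε n) (abs_rCF_le ha hb hε (n + 1))

lemma abs_rCF_sub_add_le (ha : 1 < a) (hb : |b| ≤ (a - 1) / 2) (hε : ∀ n, |ε n| = 1) (n : ℤ) :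
    |rCF a b ε n - ε n / a + b * ε (n + 1) / a ^ 3| ≤ 2 * b ^ 2 := by
  rw [rCF_eq ha hb hε]
  exact abs_one_div_mul_add_mul_sub_add_le ha hb (hε n) (abs_rCF_le ha hb hε (n + 1))
    (abs_rCF_sub_le ha hb hε (n + 1))

lemma sTrunc_eq_rTrunc (ε : ℤ → ℝ) :
    ∀ k n, sTrunc a b ε k n = rTrunc a b (fun m => -ε (-m)) k (-n)
  | 0, n => by simp [sTrunc, rTrunc]
  | k + 1, n => by
    rw [sTrunc, rTrunc, sTrunc_eq_rTrunc ε k, neg_sub, sub_eq_neg_add, neg_neg]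
    ring_nf

lemma sCF_eq_rCF (ε : ℤ → ℝ) (n : ℤ) : sCF a b ε n = rCF a b (fun m => -ε (-m)) (-n) := by
  simp only [sCF, rCF, sTrunc_eq_rTrunc]

lemma abs_pFun_sub_le (ha : 1 < a) (ha2 : a ≤ 2) (hb : |b| ≤ (a - 1) / 2)
    (hε : ∀ n, |ε n| = 1) : |pFun a b ε - 1 - b * (ε (-2) / a)| ≤ 3 * b ^ 2 := by
  have hε' : ∀ n, |(fun m => -ε (-m)) n| = 1 := fun n => by simp [hε]
  have hy (j : ℕ) : |sCF a b ε (-2 - j)| ≤ 1 := by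
    rw [sCF_eq_rCF]
    exact (abs_rCF_le ha hb hε' _).trans (two_div_add_one_le_one ha.le)
  have hy0 : |sCF a b ε (-2) + ε (-2) / a| ≤ |b| := by
    simpa [sCF_eq_rCF, sub_eq_add_neg, neg_div] using abs_rCF_sub_le ha hb hε' 2
  have hp := abs_tsum_neg_pow_mul_prod_sub_le hy (hb.trans (by linarith))
  simp only [CharP.cast_eq_zero, sub_zero] at hp
  calc |pFun a b ε - 1 - b * (ε (-2) / a)|
      = |(pFun a b ε - (1 - b * sCF a b ε (-2))) - b * (sCF a b ε (-2) + ε (-2) / a)| := by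
        ring_nf
    _ ≤ 2 * b ^ 2 + |b| * |b| := by
        refine (abs_sub _ _).trans (add_le_add hp ?_)
        rw [abs_mul]; exact mul_le_mul_of_nonneg_left hy0 (abs_nonneg b)
    _ = 3 * b ^ 2 := by rw [abs_mul_abs_self]; ring

lemma abs_qFun_sub_le (ha : 1 < a) (ha2 : a ≤ 2) (hb : |b| ≤ (a - 1) / 2)
    (hε : ∀ n, |ε n| = 1) :
    |qFun a b ε - altProdSum (fun j => ε j / a) - b * ∑' n : ℕ,
        (-1) ^ n * prodDeriv (fun j => ε j / a) (fun j => -ε (j + 1) / a ^ 3) (n + 1)|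
      ≤ 3 * (∑' n : ℕ, ((n : ℝ) + 1) ^ 2 * (2 / (a + 1)) ^ n) * b ^ 2 := by
  have ha0 : 0 < a := by linarith
  have hα (j : ℕ) : |ε j / a| ≤ a⁻¹ := by rw [abs_div, hε, abs_of_pos ha0, one_div]
  have hβ (j : ℕ) : |-ε (j + 1) / a ^ 3| ≤ a⁻¹ := by
    rw [abs_div, abs_neg, hε, abs_of_pos (by positivity), one_div]
    exact inv_anti₀ ha0
      (by nlinarith [mul_pos (mul_pos ha0 (sub_pos.2 ha)) (by linarith : (0 : ℝ) < a + 1)])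
  have huv : a⁻¹ ≤ 2 / (a + 1) := by
    rw [inv_eq_one_div, div_le_div_iff₀ ha0 (by linarith)]; linarith
  have h := abs_altProdSum_sub_le (x := fun j => rCF a b ε j) (fun j => abs_rCF_le ha hb hε j)
    hα hβ huv (by positivity) ((div_lt_one (by linarith)).2 (by linarith))
    (hb.trans (by linarith)) zero_le_two
    (fun j => by convert abs_rCF_sub_add_le ha hb hε j using 2; ring)
  exact h.trans_eq (by ring)

end ContinuedFraction

section Kneading

variable {a : ℝ} {ε : ℤ → ℝ}

lemma tent_iterate_succ (a x : ℝ) (i : ℕ) :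
    (tent a)^[i + 1] x = 1 - a * |(tent a)^[i] x| := by
  rw [Function.iterate_succ_apply', tent]

lemma abs_tent_iterate_le_one (ha0 : 0 ≤ a) (ha2 : a ≤ 2) : ∀ i, |(tent a)^[i] 1| ≤ 1
  | 0 => by simp
  | i + 1 => by
    have ih := abs_tent_iterate_le_one ha0 ha2 i
    rw [tent_iterate_succ, abs_le]
    constructor <;> nlinarith [abs_nonneg ((tent a)^[i] 1)]

lemma abs_tent_iterate_eq_mul (hε : ∀ n, |ε n| = 1)
    (hk : ∀ i : ℕ, 0 ≤ ε i * (tent a)^[i] 1) (i : ℕ) :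
    |(tent a)^[i] 1| = ε i * (tent a)^[i] 1 := by
  rw [← abs_of_nonneg (hk i), abs_mul, hε, one_mul]

lemma eps_zero_eq_one (hε : ∀ n, |ε n| = 1) (hk : ∀ i : ℕ, 0 ≤ ε i * (tent a)^[i] 1) :
    ε 0 = 1 := by
  have h := hk 0
  rcases (abs_eq zero_le_one).1 (hε 0) with h' | h'
  · exact h'
  · norm_num [h'] at h

lemma eps_one_eq_neg_one (ha : 1 < a) (hε : ∀ n, |ε n| = 1)
    (hk : ∀ i : ℕ, 0 ≤ ε i * (tent a)^[i] 1) : ε 1 = -1 := by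
  have h := hk 1
  rw [Function.iterate_one, tent, abs_one, mul_one, Nat.cast_one] at h
  rcases (abs_eq zero_le_one).1 (hε 1) with h' | h'
  · rw [h'] at h; linarith
  · exact h'

lemma abs_prod_eq_one (hε : ∀ n, |ε n| = 1) (m : ℕ) : |∏ i ∈ range m, ε i| = 1 := by
  rw [abs_prod]; exact prod_eq_one fun i _ => hε i

lemma abs_sum_range_mul_succ_le (hε : ∀ n, |ε n| = 1) (m : ℕ) :
    |∑ j ∈ range m, ε j * ε (j + 1)| ≤ m :=
  (abs_sum_le_sum_abs _ _).trans (by simp [abs_mul, hε])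

noncomputable def kneadingTerm (a : ℝ) (ε : ℤ → ℝ) (j : ℕ) : ℝ :=
  (-1) ^ j * (∏ i ∈ range j, ε i) * (tent a)^[j] 1 / a ^ j

lemma kneadingTerm_sub_succ (ha : a ≠ 0) (hε : ∀ n, |ε n| = 1)
    (hk : ∀ i : ℕ, 0 ≤ ε i * (tent a)^[i] 1) (j : ℕ) :
    kneadingTerm a ε j - kneadingTerm a ε (j + 1)
      = (-1) ^ j * (∏ i ∈ range (j + 1), ε i) / a ^ (j + 1) := by
  simp only [kneadingTerm, tent_iterate_succ, abs_tent_iterate_eq_mul hε hk, prod_range_succ,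
    pow_succ]
  field_simp
  linear_combination (-(∏ i ∈ range j, ε i) * (tent a)^[j] 1 * a) *
    mul_self_eq_one_of_abs_eq_one (hε j)

lemma abs_kneadingTerm_le (ha : 1 < a) (ha2 : a ≤ 2) (hε : ∀ n, |ε n| = 1) (j : ℕ) :
    |kneadingTerm a ε j| ≤ a⁻¹ ^ j := by
  have hx := abs_tent_iterate_le_one (by linarith) ha2 j
  rw [kneadingTerm, abs_div, abs_mul, abs_mul, abs_pow, abs_neg, abs_one, one_pow, one_mul,
    abs_prod_eq_one hε, one_mul, abs_of_pos (pow_pos (by linarith : (0 : ℝ) < a) j), inv_pow]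
  exact div_le_div_of_nonneg_right hx (by positivity) |>.trans_eq (one_div _)

lemma prodDeriv_div_eq (ha : a ≠ 0) (hε : ∀ n, |ε n| = 1) :
    ∀ m, prodDeriv (fun j => ε j / a) (fun j => -ε (j + 1) / a ^ 3) m
      = -((∏ i ∈ range m, ε i) * ∑ j ∈ range m, ε j * ε (j + 1)) / a ^ (m + 2)
  | 0 => by simp [prodDeriv]
  | m + 1 => by
    rw [prodDeriv, prodDeriv_div_eq ha hε m, prod_div_distrib, prod_const, card_range,
      prod_range_succ, sum_range_succ]
    linear_combination ((∏ i ∈ range m, ε i) * ε (m + 1) / a ^ (m + 3)) *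
      mul_self_eq_one_of_abs_eq_one (hε m)

lemma tsum_prodDeriv_div_eq (ha : 1 < a) (ha2 : a ≤ 2) (hε : ∀ n, |ε n| = 1)
    (hk : ∀ i : ℕ, 0 ≤ ε i * (tent a)^[i] 1) :
    ∑' n : ℕ, (-1) ^ n * prodDeriv (fun j => ε j / a) (fun j => -ε (j + 1) / a ^ 3) (n + 1)
      = -(∑' j : ℕ, ε j * ε (j + 1) * kneadingTerm a ε j) / a ^ 2 := by
  have ha0 : (0 : ℝ) < a := by linarith
  set σ := kneadingTerm a ε
  set c : ℕ → ℝ := fun m => ∑ j ∈ range m, ε j * ε (j + 1)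
  have hσ : ∀ j, |σ j| ≤ a⁻¹ ^ j := abs_kneadingTerm_le ha ha2 hε
  have hr0 : 0 ≤ a⁻¹ := by positivity
  have hr1 : a⁻¹ < 1 := inv_lt_one_of_one_lt₀ ha
  have hterm (n : ℕ) :
      (-1) ^ n * prodDeriv (fun j => ε j / a) (fun j => -ε (j + 1) / a ^ 3) (n + 1)
        = -((σ n - σ (n + 1)) * c (n + 1)) / a ^ 2 := by
    rw [prodDeriv_div_eq ha0.ne' hε, kneadingTerm_sub_succ ha0.ne' hε hk]
    field_simp
    ring
  have hs : Summable fun n => (σ n - σ (n + 1)) * c (n + 1) := by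
    refine ((summable_add_one_sq_mul_geometric hr0 hr1).mul_left 2).of_norm_bounded fun n => ?_
    have hσn : |σ n - σ (n + 1)| ≤ 2 * a⁻¹ ^ n := by
      have := pow_le_pow_of_le_one hr0 hr1.le (Nat.le_add_right n 1)
      linarith [abs_sub (σ n) (σ (n + 1)), hσ n, hσ (n + 1)]
    have hcn : |c (n + 1)| ≤ ((n : ℝ) + 1) ^ 2 := by
      have := abs_sum_range_mul_succ_le hε (n + 1)
      push_cast at this
      nlinarith [(n.cast_nonneg : (0 : ℝ) ≤ n)]
    rw [Real.norm_eq_abs, abs_mul]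
    calc |σ n - σ (n + 1)| * |c (n + 1)| ≤ 2 * a⁻¹ ^ n * ((n : ℝ) + 1) ^ 2 := by gcongr
      _ = 2 * (((n : ℝ) + 1) ^ 2 * a⁻¹ ^ n) := by ring
  have he : Summable fun j : ℕ => ε j * ε (j + 1) * σ j :=
    (summable_geometric_of_lt_one hr0 hr1).of_norm_bounded fun j => by
      rw [Real.norm_eq_abs, abs_mul, abs_mul, hε, hε, one_mul, one_mul]; exact hσ j
  have hlim : Tendsto (fun N => c N * σ N) atTop (𝓝 0) := by
    refine squeeze_zero_norm (fun N => ?_) (tendsto_self_mul_const_pow_of_lt_one hr0 hr1)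
    rw [Real.norm_eq_abs, abs_mul]
    exact mul_le_mul (abs_sum_range_mul_succ_le hε N) (hσ N) (abs_nonneg _) N.cast_nonneg
  simp_rw [hterm]
  rw [tsum_div_const, tsum_neg, tsum_sub_mul_sum_range hs he hlim]

lemma exists_tsum_kneadingTerm_mul_eq (ha : 1 < a) (ha2 : a ≤ 2) (hε : ∀ n, |ε n| = 1)
    (hk : ∀ i : ℕ, 0 ≤ ε i * (tent a)^[i] 1) :
    ∃ F T : ℝ, |F| = |a ^ 2 - a - 1| ∧ |T| ≤ 1 ∧
      (∑' j : ℕ, ε j * ε (j + 1) * kneadingTerm a ε j) * (2 * a ^ 2 * (a - 1))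
        = 2 * (a - 1) * (-a ^ 2 - ε 2 * (a ^ 2 - a) + F) + 2 * T := by
  have ha0 : 0 < a := by linarith
  have ha1 : 0 < a - 1 := by linarith
  have hr0 : 0 ≤ a⁻¹ := by positivity
  have hr1 : a⁻¹ < 1 := inv_lt_one_of_one_lt₀ ha
  have hε0 := eps_zero_eq_one hε hk
  have hε1 := eps_one_eq_neg_one ha hε hk
  have hσ0 : kneadingTerm a ε 0 = 1 := by simp [kneadingTerm]
  have hσ1 : kneadingTerm a ε 1 = 1 - a⁻¹ := by
    have := kneadingTerm_sub_succ ha0.ne' hε hk 0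
    norm_num [hε0, hσ0] at this; linarith
  have hσ2 : kneadingTerm a ε 2 = 1 - a⁻¹ - (a ^ 2)⁻¹ := by
    have := kneadingTerm_sub_succ ha0.ne' hε hk 1
    norm_num [prod_range_succ, hε0, hε1, hσ1] at this; linarith
  set f : ℕ → ℝ := fun j => ε j * ε (j + 1) * kneadingTerm a ε j
  have hf (j : ℕ) : |f j| ≤ a⁻¹ ^ j := by
    simp only [f, abs_mul, hε, one_mul]; exact abs_kneadingTerm_le ha ha2 hε j
  have hs : Summable f := (summable_geometric_of_lt_one hr0 hr1).of_norm_bounded hf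
  refine ⟨f 2 * a ^ 2, (∑' j, f (j + 3)) * (a ^ 2 * (a - 1)), ?_, ?_, ?_⟩
  · have h2 : (1 - a⁻¹ - (a ^ 2)⁻¹) * a ^ 2 = a ^ 2 - a - 1 := by field_simp
    simp only [f, hσ2, abs_mul, hε, one_mul]
    rw [← abs_mul, h2]
  · have := abs_tsum_nat_add_le_geometric hr0 hr1 hf 3
    rw [abs_mul, abs_of_pos (by positivity : 0 < a ^ 2 * (a - 1)), ← le_div_iff₀ (by positivity)]
    exact this.trans_eq (by field_simp)
  · rw [← hs.sum_add_tsum_nat_add 3]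
    norm_num [sum_range_succ, f, hε0, hε1, hσ0, hσ1]
    field_simp
    ring

lemma tsum_kneadingTerm_mem_Icc (ha : 1 < a) (ha2 : a ≤ 2) (hε : ∀ n, |ε n| = 1)
    (hk : ∀ i : ℕ, 0 ≤ ε i * (tent a)^[i] 1) :
    ∑' j : ℕ, ε j * ε (j + 1) * kneadingTerm a ε j ∈
      Set.Icc ((2 * a ^ 2 - 7 * a + 2) / (2 * a * (a - 1)))
        ((2 * a ^ 2 - 7 * a + 8) / (2 * a * (a - 1))) := by
  have ha0 : 0 < a := by linarith
  have ha1 : 0 < a - 1 := by linarith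
  obtain ⟨F, T, hF, hT, hW⟩ := exists_tsum_kneadingTerm_mul_eq ha ha2 hε hk
  set W := ∑' j : ℕ, ε j * ε (j + 1) * kneadingTerm a ε j
  obtain ⟨hT1, hT2⟩ := abs_le.1 hT
  suffices a * (2 * a ^ 2 - 7 * a + 2) ≤ W * (2 * a ^ 2 * (a - 1)) ∧
      W * (2 * a ^ 2 * (a - 1)) ≤ a * (2 * a ^ 2 - 7 * a + 8) by
    rw [Set.mem_Icc, div_le_iff₀ (by positivity), le_div_iff₀ (by positivity)]
    constructor <;> nlinarith
  rw [hW]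
  rcases (abs_eq zero_le_one).1 (hε 2) with h2 | h2
  · have hx2 : 0 ≤ 1 + a - a ^ 2 := by
      have h := hk 2
      rw [tent_iterate_succ, Function.iterate_one, tent, abs_one, mul_one,
        abs_of_neg (by linarith), Nat.cast_ofNat, h2, one_mul] at h
      linarith
    have hF' : |F| ≤ 1 + a - a ^ 2 := by rw [hF, abs_of_nonpos (by linarith)]; linarith
    obtain ⟨hF1, hF2⟩ := abs_le.1 hF'
    rw [h2]
    constructor
    · nlinarith [mul_nonneg ha1.le hx2, mul_nonneg ha1.le (by linarith : 0 ≤ F + (1 + a - a ^ 2))]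
    · nlinarith [mul_nonneg ha1.le (by linarith : 0 ≤ (1 + a - a ^ 2) - F),
        mul_nonneg ha0.le (sq_nonneg (a - 17 / 16))]
  · have hF' : |F| ≤ 1 := by rw [hF, abs_le]; constructor <;> nlinarith
    obtain ⟨hF1, hF2⟩ := abs_le.1 hF'
    rw [h2]
    constructor
    · nlinarith [mul_nonneg ha1.le (by linarith : 0 ≤ F + 1),
        mul_nonneg (mul_nonneg ha0.le (by linarith : (0 : ℝ) ≤ 2 * a - 1))
          (by linarith : 0 ≤ 2 - a)]
    · nlinarith [mul_nonneg ha1.le (by linarith : 0 ≤ 1 - F),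
        mul_nonneg ha0.le (sq_nonneg (a - 5 / 4))]

end Kneading

theorem deriv_p_sub_q_bounds :
    ∀ a : ℝ, 1 < a → a ≤ 2 → ∀ ε : ℤ → ℝ, (∀ n : ℤ, ε n = 1 ∨ ε n = -1) →
      (∀ i : ℕ, 0 ≤ ε (i : ℤ) * (tent a)^[i] 1) →
      ∃ d : ℝ, HasDerivAt (fun b => pFun a b ε - qFun a b ε) d 0 ∧
        1 / (a * ε (-2)) - (-2 * a ^ 2 + 7 * a - 2) / (2 * a ^ 3 * (a - 1)) ≤ d ∧
        d ≤ 1 / (a * ε (-2)) - (-2 * a ^ 2 + 7 * a - 8) / (2 * a ^ 3 * (a - 1)) := by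
  intro a ha ha2 ε hε hk
  have hε' : ∀ n, |ε n| = 1 := fun n => by rcases hε n with h | h <;> simp [h]
  set W := ∑' j : ℕ, ε j * ε (j + 1) * kneadingTerm a ε j with hW
  refine ⟨ε (-2) / a + W / a ^ 2, ?_, ?_⟩
  · refine hasDerivAt_zero_of_abs_sub_le (c := 1 - altProdSum fun j => ε j / a)
      (K := 3 + 3 * ∑' n : ℕ, ((n : ℝ) + 1) ^ 2 * (2 / (a + 1)) ^ n) (half_pos (sub_pos.2 ha))
      fun b hb => ?_
    have hq := abs_qFun_sub_le ha ha2 hb hε'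
    rw [tsum_prodDeriv_div_eq ha ha2 hε' hk, ← hW] at hq
    calc _ = |(pFun a b ε - 1 - b * (ε (-2) / a))
            - (qFun a b ε - altProdSum (fun j => ε j / a) - b * (-W / a ^ 2))| := by
          congr 1; ring
      _ ≤ _ := (abs_sub _ _).trans (add_le_add (abs_pFun_sub_le ha ha2 hb hε') hq)
      _ = _ := by ring
  · obtain ⟨hlo, hhi⟩ := tsum_kneadingTerm_mem_Icc ha ha2 hε' hk
    have ha0 : a ≠ 0 := by linarith
    have ha1 : a - 1 ≠ 0 := by linarith
    have hε2 : 1 / (a * ε (-2)) = ε (-2) / a := by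
      rcases hε (-2) with h | h <;> rw [h] <;> field_simp
    have hscale (c : ℝ) : (2 * a ^ 2 - 7 * a + c) / (2 * a * (a - 1)) / a ^ 2
        = -((-2 * a ^ 2 + 7 * a - c) / (2 * a ^ 3 * (a - 1))) := by field_simp; ring
    have hlo' := div_le_div_of_nonneg_right hlo (sq_nonneg a)
    have hhi' := div_le_div_of_nonneg_right hhi (sq_nonneg a)
    rw [hscale] at hlo' hhi'
    rw [hε2]
    constructor <;> linarith
end
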